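/- arXiv:math/0307269 — 6 statements merged into one kernel-verified Lean document; each statement's English description precedes it below -/
import Mathlib

section
/- For 0 ≤ i ≤ D−1 we have E_{i+1}*A_iE_1* − E_i*A_{i+1}E_1* = Σ_{h=0}^{i} A_hE_1* − Σ_{h=0}^{i} E_h*JE_1*. -/
/-!
Look at the entry `(y, z)` of both sides with `z` adjacent to `x` (otherwise both sides vanish
there). Put `a = ∂(x, y)` and `b = ∂(y, z)`; adjacency of `x` and `z` gives `|a - b| ≤ 1`. The
right-hand entry is `[b ≤ i] - [a ≤ i]`, and for two numbers at distance at most one this is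
`+1` exactly when `(a, b) = (i + 1, i)` and `-1` exactly when `(a, b) = (i, i + 1)`, which is
the left-hand entry.
-/

open Matrix Polynomial BigOperators

noncomputable section

variable {X : Type*} [Fintype X] [DecidableEq X]

/-- The `i`-th distance matrix of the graph `G` (indexed by `ℤ`; by convention it is
the zero matrix for `i < 0` and also for `i` larger than the diameter). -/
def distMat (G : SimpleGraph X) (i : ℤ) : Matrix X X ℂ :=
  Matrix.of fun y z => if (G.dist y z : ℤ) = i then (1 : ℂ) else 0

/-- The all-ones matrix `J`. -/
def allOnes (X : Type*) : Matrix X X ℂ := Matrix.of fun _ _ => (1 : ℂ)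

/-- The `i`-th dual idempotent `Eᵢ*` with respect to the base point `x`
(indexed by `ℤ`; zero for `i < 0` and for `i` larger than the diameter). -/
def dualIdem (G : SimpleGraph X) (x : X) (i : ℤ) : Matrix X X ℂ :=
  Matrix.of fun y z => if y = z ∧ (G.dist x y : ℤ) = i then (1 : ℂ) else 0

/-- The characteristic vector `sᵢ` of the `i`-th sphere around `x`. -/
def sphereVec (G : SimpleGraph X) (x : X) (i : ℤ) : X → ℂ :=
  fun y => if (G.dist x y : ℤ) = i then (1 : ℂ) else 0

/-- `G` is distance-regular with diameter `D` and intersection numbers `p h i j`: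
`G` is connected with diameter `D`, and for all `h,i,j ≤ D` and all vertices `y,z`
at distance `h`, the number of vertices `w` with `dist y w = i` and `dist w z = j`
equals `p h i j`. -/
def IsDRG (G : SimpleGraph X) (D : ℕ) (p : ℕ → ℕ → ℕ → ℕ) : Prop :=
  G.Connected ∧ (∀ y z : X, G.dist y z ≤ D) ∧ (∃ y z : X, G.dist y z = D) ∧
    ∀ h i j : ℕ, h ≤ D → i ≤ D → j ≤ D → ∀ y z : X, G.dist y z = h →
      (Finset.univ.filter fun w => G.dist y w = i ∧ G.dist w z = j).card = p h i j

/-- The Bose–Mesner algebra `M`, the subalgebra of `Mat_X(ℂ)` generated by the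
adjacency matrix. -/
def bmAlg (G : SimpleGraph X) : Subalgebra ℂ (Matrix X X ℂ) :=
  Algebra.adjoin ℂ {distMat G 1}

/-- The Terwilliger algebra `T`, generated by `A, E₀*, …, E_D*`. -/
def twAlg (G : SimpleGraph X) (x : X) (D : ℕ) : Subalgebra ℂ (Matrix X X ℂ) :=
  Algebra.adjoin ℂ ({distMat G 1} ∪ {B | ∃ i : ℕ, i ≤ D ∧ B = dualIdem G x (i : ℤ)})

/-- `W` is a `T`-module. -/
def IsTMod (G : SimpleGraph X) (x : X) (D : ℕ) (W : Submodule ℂ (X → ℂ)) : Prop :=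
  ∀ B ∈ twAlg G x D, ∀ w ∈ W, B.mulVec w ∈ W

/-- `W` is an irreducible `T`-module. -/
def IsIrredTMod (G : SimpleGraph X) (x : X) (D : ℕ) (W : Submodule ℂ (X → ℂ)) : Prop :=
  IsTMod G x D W ∧ W ≠ ⊥ ∧
    ∀ U : Submodule ℂ (X → ℂ), U ≤ W → IsTMod G x D U → U = ⊥ ∨ U = W

/-- `W` is thin: `dim Eᵢ* W ≤ 1` for `0 ≤ i ≤ D`. -/
def IsThin (G : SimpleGraph X) (x : X) (D : ℕ) (W : Submodule ℂ (X → ℂ)) : Prop :=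
  ∀ i : ℕ, i ≤ D → Module.finrank ℂ (W.map (dualIdem G x (i : ℤ)).mulVecLin) ≤ 1

/-- `W` has endpoint `1`, i.e. `E₀* W = 0` and `E₁* W ≠ 0`. -/
def HasEndpointOne (G : SimpleGraph X) (x : X) (W : Submodule ℂ (X → ℂ)) : Prop :=
  W.map (dualIdem G x 0).mulVecLin = ⊥ ∧ W.map (dualIdem G x 1).mulVecLin ≠ ⊥

/-- The linear map `P ↦ P v` on matrices. -/
def actOn (v : X → ℂ) : Matrix X X ℂ →ₗ[ℂ] (X → ℂ) where
  toFun P := P.mulVec v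
  map_add' P Q := Matrix.add_mulVec P Q v
  map_smul' c P := by simp [Matrix.smul_mulVec]

/-- The subspace `(M; v) = {P ∈ M : P v ∈ E_D* V}`. -/
def MsubV (G : SimpleGraph X) (x : X) (D : ℕ) (v : X → ℂ) : Submodule ℂ (Matrix X X ℂ) :=
  (bmAlg G).toSubmodule ⊓
    Submodule.comap (actOn v) (LinearMap.range (dualIdem G x (D : ℤ)).mulVecLin)

/-- The space `M(θ) = {Y ∈ M : (A - θI) Y ∈ ℂ A_D}` for `θ ∈ ℂ`. -/
def pseudoSpace (G : SimpleGraph X) (D : ℕ) (θ : ℂ) : Submodule ℂ (Matrix X X ℂ) :=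
  (bmAlg G).toSubmodule ⊓
    Submodule.comap (LinearMap.mulLeft ℂ (distMat G 1 - θ • 1))
      (Submodule.span ℂ {distMat G (D : ℤ)})

lemma dualIdem_eq_diagonal (G : SimpleGraph X) (x : X) (i : ℤ) :
    dualIdem G x i = diagonal (sphereVec G x i) := by
  ext y z
  by_cases h : y = z <;> simp [dualIdem, sphereVec, diagonal, h]

lemma dualIdem_mul_apply (G : SimpleGraph X) (x : X) (i : ℤ) (M : Matrix X X ℂ) (y z : X) :
    (dualIdem G x i * M) y z = if (G.dist x y : ℤ) = i then M y z else 0 := by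
  simp [dualIdem_eq_diagonal, sphereVec]

lemma mul_dualIdem_eq_of_apply_eq {G : SimpleGraph X} {x : X} {j : ℤ} {M N : Matrix X X ℂ}
    (h : ∀ y z, (G.dist x z : ℤ) = j → M y z = N y z) :
    M * dualIdem G x j = N * dualIdem G x j := by
  ext y z
  by_cases hz : (G.dist x z : ℤ) = j <;> simp [dualIdem_eq_diagonal, sphereVec, hz, h y z]

lemma sum_range_ite_natCast_eq (n i : ℕ) :
    ∑ h ∈ Finset.range (i + 1), (if (n : ℤ) = h then (1 : ℂ) else 0) =
      if n ≤ i then 1 else 0 := by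
  simp [Finset.sum_ite_eq]

lemma sum_distMat_apply (G : SimpleGraph X) (i : ℕ) (y z : X) :
    (∑ h ∈ Finset.range (i + 1), distMat G h) y z = if G.dist y z ≤ i then 1 else 0 := by
  simp only [Matrix.sum_apply, distMat, Matrix.of_apply, sum_range_ite_natCast_eq]

lemma sum_dualIdem_mul_allOnes_apply (G : SimpleGraph X) (x : X) (i : ℕ) (y z : X) :
    (∑ h ∈ Finset.range (i + 1), dualIdem G x h * allOnes X) y z =
      if G.dist x y ≤ i then 1 else 0 := by
  simp only [Matrix.sum_apply, dualIdem_mul_apply, allOnes, Matrix.of_apply,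
    sum_range_ite_natCast_eq]

lemma ite_le_sub_ite_le_of_le_add_one {a b i : ℕ} (hab : a ≤ b + 1) (hba : b ≤ a + 1) :
    ((if b ≤ i then 1 else 0) - (if a ≤ i then 1 else 0) : ℂ) =
      (if a = i + 1 ∧ b = i then 1 else 0) - (if a = i ∧ b = i + 1 then 1 else 0) := by
  split_ifs <;> first | omega | norm_num

theorem stmt4_general (G : SimpleGraph X) (x : X)
    (i : ℕ) :
    dualIdem G x ((i : ℤ) + 1) * distMat G (i : ℤ) * dualIdem G x 1 -
        dualIdem G x (i : ℤ) * distMat G ((i : ℤ) + 1) * dualIdem G x 1 =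
      (∑ h ∈ Finset.range (i + 1), distMat G (h : ℤ) * dualIdem G x 1) -
        ∑ h ∈ Finset.range (i + 1), dualIdem G x (h : ℤ) * allOnes X * dualIdem G x 1 := by
  rw [← sub_mul, ← Finset.sum_mul, ← Finset.sum_mul, ← sub_mul]
  refine mul_dualIdem_eq_of_apply_eq fun y z hz => ?_
  have hadj : G.Adj x z := G.dist_eq_one_iff_adj.mp (by exact_mod_cast hz)
  have hdist := hadj.diff_dist_adj (u := y)
  rw [G.dist_comm (u := y) (v := x)] at hdist
  rw [Matrix.sub_apply, Matrix.sub_apply, dualIdem_mul_apply, dualIdem_mul_apply,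
    sum_distMat_apply, sum_dualIdem_mul_allOnes_apply,
    ite_le_sub_ite_le_of_le_add_one (by omega) (by omega)]
  simp only [distMat, Matrix.of_apply, ← ite_and, ← Nat.cast_add_one, Nat.cast_inj]

/-- For `0 ≤ i ≤ D-1`:
`E_{i+1}* A_i E₁* - Eᵢ* A_{i+1} E₁* = ∑_{h=0}^{i} A_h E₁* - ∑_{h=0}^{i} E_h* J E₁*`. -/
theorem stmt4 (G : SimpleGraph X) (D : ℕ) (p : ℕ → ℕ → ℕ → ℕ)
    (hdrg : IsDRG G D p) (hD : 3 ≤ D) (x : X)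
    (i : ℕ) (hi : i ≤ D - 1) :
    dualIdem G x ((i : ℤ) + 1) * distMat G (i : ℤ) * dualIdem G x 1 -
        dualIdem G x (i : ℤ) * distMat G ((i : ℤ) + 1) * dualIdem G x 1 =
      (∑ h ∈ Finset.range (i + 1), distMat G (h : ℤ) * dualIdem G x 1) -
        ∑ h ∈ Finset.range (i + 1), dualIdem G x (h : ℤ) * allOnes X * dualIdem G x 1 :=
  stmt4_general G x i
end
end

section
/- Let v be a vector in E_1*V which is orthogonal to s_1. Then for 0 ≤ i ≤ D−1 we have E_{i+1}*A_iv − E_i*A_{i+1}v = Σ_{h=0}^{i} A_hv. -/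
open Matrix Polynomial BigOperators

noncomputable section

variable {X : Type*} [Fintype X] [DecidableEq X]

/-! `v` is supported on the neighbourhood of `x` and sums to zero. For a vertex `y` at
distance `k` from `x`, every neighbour of `x` lies at distance `k - 1`, `k` or `k + 1`
from `y`, so `∑_{h ≤ i} (A_h v)(y) = ∑_{∂(y,z) ≤ i} v z` vanishes unless `i = k - 1`,
where it is `(A_{k-1} v)(y)`, or `i = k`, where it is `-(A_{k+1} v)(y)`. -/

section LevelSums

variable {ι : Type*} [Fintype ι] (f : ι → ℕ) {w : ι → ℂ}

lemma sum_ite_congr_of_support {p q : ι → Prop} [DecidablePred p] [DecidablePred q]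
    (h : ∀ z, w z ≠ 0 → (p z ↔ q z)) :
    (∑ z, if p z then w z else 0) = ∑ z, if q z then w z else 0 :=
  Finset.sum_congr rfl fun z _ => by
    by_cases hz : w z = 0
    · simp [hz]
    · simp [h z hz]

lemma sum_ite_eq_zero_of_support {p : ι → Prop} [DecidablePred p] (hsum : ∑ z, w z = 0)
    (h : ∀ z, w z ≠ 0 → p z) : (∑ z, if p z then w z else 0) = 0 :=
  (sum_ite_congr_of_support (q := fun _ => True) fun z hz => iff_true_intro (h z hz)).trans
    (by simpa using hsum)

lemma sum_ite_le_of_support_near {k : ℕ} (hsum : ∑ z, w z = 0)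
    (hw : ∀ z, w z ≠ 0 → k ≤ f z + 1 ∧ f z ≤ k + 1) (i : ℕ) :
    (∑ z, if f z ≤ i then w z else 0) =
      (if k = i + 1 then ∑ z, if f z = i then w z else 0 else 0) -
        (if k = i then ∑ z, if f z = i + 1 then w z else 0 else 0) := by
  rcases lt_trichotomy (i + 1) k with hik | rfl | hki
  · rw [if_neg hik.ne', if_neg (by omega), sub_zero,
      sum_ite_congr_of_support (q := fun _ => False) fun z hz => ?_]
    · simp
    · have := hw z hz
      simp only [iff_false, not_le]
      omega
  · rw [if_pos rfl, if_neg (by omega), sub_zero]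
    refine sum_ite_congr_of_support fun z hz => ?_
    have := hw z hz
    omega
  rcases (Nat.lt_succ_iff.mp hki).eq_or_lt with rfl | hki
  · have hsplit : ∀ z, ((if f z ≤ k then w z else 0) + if f z = k + 1 then w z else 0) =
        if f z ≤ k + 1 then w z else 0 := fun z => by
      split_ifs <;> first | omega | simp
    rw [if_neg (by omega), if_pos rfl, zero_sub, eq_neg_iff_add_eq_zero,
      ← Finset.sum_add_distrib, Finset.sum_congr rfl fun z _ => hsplit z]
    exact sum_ite_eq_zero_of_support hsum fun z hz => (hw z hz).2
  · rw [if_neg (by omega), if_neg (by omega), sub_zero]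
    refine sum_ite_eq_zero_of_support hsum fun z hz => ?_
    have := hw z hz
    omega

end LevelSums

section DistanceMatrices

variable (G : SimpleGraph X) (x : X) (w : X → ℂ)

lemma dualIdem_mulVec_apply (n : ℕ) (y : X) :
    (dualIdem G x n *ᵥ w) y = if G.dist x y = n then w y else 0 := by
  simp [dualIdem, mulVec, dotProduct, ite_and]

omit [DecidableEq X] in
lemma distMat_mulVec_apply (n : ℕ) (y : X) :
    (distMat G n *ᵥ w) y = ∑ z, if G.dist y z = n then w z else 0 := by
  simp [distMat, mulVec, dotProduct]

omit [DecidableEq X] in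
lemma sum_range_distMat_mulVec_apply (i : ℕ) (y : X) :
    (∑ h ∈ Finset.range (i + 1), distMat G h *ᵥ w) y =
      ∑ z, if G.dist y z ≤ i then w z else 0 := by
  simp only [Finset.sum_apply, distMat_mulVec_apply]
  rw [Finset.sum_comm]
  simp

lemma sum_mul_conj_sphereVec (n : ℕ) :
    ∑ y, w y * starRingEnd ℂ (sphereVec G x n y) = ∑ y, (dualIdem G x n *ᵥ w) y := by
  simp [sphereVec, dualIdem_mulVec_apply]

variable {G x w}

lemma dist_eq_of_dualIdem_mulVec_eq {n : ℕ} (hw : dualIdem G x n *ᵥ w = w) {z : X}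
    (hz : w z ≠ 0) : G.dist x z = n := by
  by_contra h
  rw [← hw, dualIdem_mulVec_apply, if_neg h] at hz
  exact hz rfl

omit [Fintype X] [DecidableEq X] in
lemma SimpleGraph.Connected.dist_near_of_dist_eq_one (hG : G.Connected) {y z : X}
    (hxz : G.dist x z = 1) : G.dist x y ≤ G.dist y z + 1 ∧ G.dist y z ≤ G.dist x y + 1 := by
  have h₁ : G.dist x y ≤ G.dist x z + G.dist z y := hG.dist_triangle
  have h₂ : G.dist y z ≤ G.dist y x + G.dist x z := hG.dist_triangle
  have c₁ : G.dist y x = G.dist x y := SimpleGraph.dist_comm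
  have c₂ : G.dist z y = G.dist y z := SimpleGraph.dist_comm
  omega

end DistanceMatrices

theorem stmt5_general (G : SimpleGraph X) (D : ℕ) (p : ℕ → ℕ → ℕ → ℕ)
    (hdrg : IsDRG G D p) (x : X)
    (v : X → ℂ) (hvE1 : (dualIdem G x 1).mulVec v = v)
    (horth : ∑ y : X, v y * (starRingEnd ℂ) (sphereVec G x 1 y) = 0)
    (i : ℕ) :
    (dualIdem G x ((i : ℤ) + 1)).mulVec ((distMat G (i : ℤ)).mulVec v) -
        (dualIdem G x (i : ℤ)).mulVec ((distMat G ((i : ℤ) + 1)).mulVec v) =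
      ∑ h ∈ Finset.range (i + 1), (distMat G (h : ℤ)).mulVec v := by
  have hsum : ∑ z, v z = 0 := by
    rw [← Nat.cast_one] at hvE1 horth
    rwa [sum_mul_conj_sphereVec, hvE1] at horth
  have hnear : ∀ y z, v z ≠ 0 → G.dist x y ≤ G.dist y z + 1 ∧ G.dist y z ≤ G.dist x y + 1 :=
    fun y z hz => hdrg.1.dist_near_of_dist_eq_one
      (dist_eq_of_dualIdem_mulVec_eq hvE1 hz)
  funext y
  rw [← Nat.cast_succ, Pi.sub_apply, dualIdem_mulVec_apply, dualIdem_mulVec_apply,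
    distMat_mulVec_apply, distMat_mulVec_apply, sum_range_distMat_mulVec_apply,
    sum_ite_le_of_support_near (G.dist y) hsum (hnear y) i]

/-- Let `v ∈ E₁* V` be orthogonal to `s₁`.  Then for `0 ≤ i ≤ D-1` we
have `E_{i+1}* A_i v - Eᵢ* A_{i+1} v = ∑_{h=0}^{i} A_h v`. -/
theorem stmt5 (G : SimpleGraph X) (D : ℕ) (p : ℕ → ℕ → ℕ → ℕ)
    (hdrg : IsDRG G D p) (hD : 3 ≤ D) (x : X)
    (v : X → ℂ) (hvE1 : (dualIdem G x 1).mulVec v = v)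
    (horth : ∑ y : X, v y * (starRingEnd ℂ) (sphereVec G x 1 y) = 0)
    (i : ℕ) (hi : i ≤ D - 1) :
    (dualIdem G x ((i : ℤ) + 1)).mulVec ((distMat G (i : ℤ)).mulVec v) -
        (dualIdem G x (i : ℤ)).mulVec ((distMat G ((i : ℤ) + 1)).mulVec v) =
      ∑ h ∈ Finset.range (i + 1), (distMat G (h : ℤ)).mulVec v :=
  stmt5_general G D p hdrg x v hvE1 horth i
end
end

section
/- For every θ ∈ ℂ, the matrix Σ_{i=0}^{D} f_i(θ)·k_i^{−1}·A_i is a basis for M(θ); that is, it is a nonzero element of M(θ) and M(θ) equals its ℂ-span. -/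
open Matrix Polynomial BigOperators

noncomputable section

variable {X : Type*} [Fintype X] [DecidableEq X]

/-!
Every element of `M` is a combination `∑ yᵢ Aᵢ`, and `(A - θI) ∑ yᵢ Aᵢ ∈ ℂ A_D` says exactly that
`∑ᵢ p^j_{1i} yᵢ = θ yⱼ` for all `j < D`. Since `p^j_{1i} = 0` for `i > j + 1` and `b_j ≠ 0`, a
solution is determined by `y₀`, so `M(θ)` is at most one-dimensional. Conversely the identity
`kⱼ p^j_{1i} = kᵢ p^i_{1j}` turns the recurrence defining the `fᵢ` into the statement that
`yᵢ = fᵢ(θ) / kᵢ` is a solution, and `y₀ = 1`.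
-/

open Finset

namespace SimpleGraph

variable {V : Type*} {G : SimpleGraph V}

lemma Connected.exists_adj_dist_eq (hG : G.Connected) {y z : V} {n : ℕ}
    (h : G.dist y z = n + 1) : ∃ w, G.Adj y w ∧ G.dist w z = n := by
  obtain ⟨q, hq⟩ := (hG y z).exists_walk_length_eq_dist
  rw [h] at hq
  cases q with
  | nil => simp at hq
  | @cons _ w _ hyw q =>
    rw [Walk.length_cons, Nat.add_right_cancel_iff] at hq
    refine ⟨w, hyw, le_antisymm (hq ▸ dist_le q) ?_⟩
    have := hG.dist_triangle (u := y) (v := w) (w := z)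
    rw [h, dist_eq_one_iff_adj.2 hyw] at this
    omega

lemma Connected.exists_dist_eq_of_le (hG : G.Connected) {y z : V} {m : ℕ}
    (hm : m ≤ G.dist y z) : ∃ w, G.dist w z = m := by
  induction h : G.dist y z generalizing y with
  | zero => exact ⟨y, by omega⟩
  | succ n ih =>
    rcases hm.eq_or_lt with hm | hm
    · exact ⟨y, by omega⟩
    · obtain ⟨w, -, hw⟩ := hG.exists_adj_dist_eq h
      exact ih (hw ▸ by omega) hw

end SimpleGraph

section DistComb

variable {V : Type*} {G : SimpleGraph V} {D : ℕ}

lemma distMat_natCast_apply (i : ℕ) (u v : V) :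
    distMat G i u v = if G.dist u v = i then 1 else 0 := by
  simp [distMat]

lemma distMat_zero [DecidableEq V] (hG : G.Connected) : distMat G 0 = 1 := by
  ext u v
  simp [distMat, Matrix.one_apply, hG.dist_eq_zero_iff]

def distComb (G : SimpleGraph V) (D : ℕ) (y : ℕ → ℂ) : Matrix V V ℂ :=
  ∑ i ∈ range (D + 1), y i • distMat G i

lemma distComb_apply (hD : ∀ u v, G.dist u v ≤ D) (y : ℕ → ℂ) (u v : V) :
    distComb G D y u v = y (G.dist u v) := by
  simp [distComb, Matrix.sum_apply, distMat_natCast_apply, Nat.lt_succ_of_le (hD u v)]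

lemma distMat_eq_distComb (hD : ∀ u v, G.dist u v ≤ D) (i : ℕ) :
    distMat G i = distComb G D (Pi.single i 1) := by
  ext u v
  rw [distComb_apply hD, distMat_natCast_apply, Pi.single_apply]

lemma distComb_congr {y z : ℕ → ℂ} (h : ∀ i ≤ D, y i = z i) :
    distComb G D y = distComb G D z :=
  sum_congr rfl fun i hi => by rw [h i (Nat.lt_succ_iff.1 (mem_range.1 hi))]

lemma distComb_add (y z : ℕ → ℂ) : distComb G D (y + z) = distComb G D y + distComb G D z := by
  simp [distComb, add_smul, sum_add_distrib]

lemma distComb_smul (c : ℂ) (y : ℕ → ℂ) : distComb G D (c • y) = c • distComb G D y := by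
  simp [distComb, smul_sum, smul_smul]

end DistComb

/-- `∑ yᵢ Aᵢ` lies in `M(θ)` exactly when the coefficient `∑ᵢ p^j_{1i} yᵢ - θ yⱼ` of `A_j` in
`(A - θI) ∑ yᵢ Aᵢ` vanishes for every `j < D`. -/
def IsPseudoCoeff (D : ℕ) (p : ℕ → ℕ → ℕ → ℕ) (θ : ℂ) (y : ℕ → ℂ) : Prop :=
  ∀ j < D, ∑ i ∈ range (D + 1), (p j 1 i : ℂ) * y i = θ * y j

lemma IsPseudoCoeff.sub_smul {D : ℕ} {p : ℕ → ℕ → ℕ → ℕ} {θ : ℂ} {y z : ℕ → ℂ}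
    (hy : IsPseudoCoeff D p θ y) (hz : IsPseudoCoeff D p θ z) (c : ℂ) :
    IsPseudoCoeff D p θ (y - c • z) := by
  intro j hj
  simp only [Pi.sub_apply, Pi.smul_apply, smul_eq_mul, mul_sub, sum_sub_distrib,
    mul_left_comm _ c, ← mul_sum, hy j hj, hz j hj]

namespace IsDRG

variable {V : Type*} [Fintype V] {G : SimpleGraph V} {D : ℕ} {p : ℕ → ℕ → ℕ → ℕ}

lemma dist_le (hG : IsDRG G D p) (y z : V) : G.dist y z ≤ D :=
  hG.2.1 y z

lemma card_filter (hG : IsDRG G D p) {i j : ℕ} (hi : i ≤ D) (hj : j ≤ D) {y z : V} :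
    #{w | G.dist y w = i ∧ G.dist w z = j} = p (G.dist y z) i j :=
  hG.2.2.2 _ i j (hG.dist_le y z) hi hj y z rfl

lemma exists_dist_eq (hG : IsDRG G D p) {m : ℕ} (hm : m ≤ D) : ∃ y z : V, G.dist y z = m := by
  obtain ⟨y, z, hyz⟩ := hG.2.2.1
  obtain ⟨w, hw⟩ := hG.1.exists_dist_eq_of_le (hyz ▸ hm : m ≤ G.dist y z)
  exact ⟨w, z, hw⟩

lemma card_sphere (hG : IsDRG G D p) {j : ℕ} (hj : j ≤ D) (x : V) :
    #{w | G.dist x w = j} = p 0 j j := by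
  rw [← G.dist_self (v := x), ← hG.card_filter hj hj]
  congr 1
  ext w
  simp [G.dist_comm (u := w)]

lemma p_zero_zero_zero (hG : IsDRG G D p) : p 0 0 0 = 1 := by
  obtain ⟨x, -⟩ := hG.exists_dist_eq (Nat.zero_le D)
  rw [← hG.card_sphere (Nat.zero_le D) x, Finset.card_eq_one]
  exact ⟨x, by ext w; simp [hG.1.dist_eq_zero_iff, eq_comm]⟩

lemma p_zero_pos (hG : IsDRG G D p) {j : ℕ} (hj : j ≤ D) : 0 < p 0 j j := by
  obtain ⟨x, w, hxw⟩ := hG.exists_dist_eq hj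
  rw [← hG.card_sphere hj x]
  exact Finset.card_pos.2 ⟨w, by simpa using hxw⟩

lemma p_succ_one_pos (hG : IsDRG G D p) {j : ℕ} (hj : j + 1 ≤ D) : 0 < p (j + 1) 1 j := by
  obtain ⟨y, z, hyz⟩ := hG.exists_dist_eq hj
  obtain ⟨w, hyw, hwz⟩ := hG.1.exists_adj_dist_eq hyz
  rw [← hyz, ← hG.card_filter (by omega) (by omega)]
  exact Finset.card_pos.2 ⟨w, by simp [hyw, hwz]⟩

lemma p_one_eq_zero (hG : IsDRG G D p) (hD : 1 ≤ D) {h i : ℕ} (hh : h ≤ D) (hi : i ≤ D)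
    (hfar : h + 1 < i ∨ i + 1 < h) : p h 1 i = 0 := by
  obtain ⟨y, z, rfl⟩ := hG.exists_dist_eq hh
  rw [← hG.card_filter hD hi, Finset.card_eq_zero, Finset.filter_eq_empty_iff]
  rintro w - ⟨hyw, rfl⟩
  have := hG.1.dist_triangle (u := y) (v := w) (w := z)
  have := hG.1.dist_triangle (u := w) (v := y) (w := z)
  rw [G.dist_comm (u := w) (v := y)] at this
  omega

-- Both sides count the edges between the spheres of radii `j` and `i` around a vertex.
lemma p_zero_mul_p_one_comm (hG : IsDRG G D p) (hD : 1 ≤ D) {i j : ℕ} (hi : i ≤ D)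
    (hj : j ≤ D) : p 0 j j * p j 1 i = p 0 i i * p i 1 j := by
  obtain ⟨x, -⟩ := hG.exists_dist_eq hi
  set S : ℕ → Finset V := fun a => {w | G.dist x w = a}
  set r : V → V → Prop := fun w u => G.dist w u = 1
  have hcount : ∀ {a b : ℕ}, a ≤ D → b ≤ D → ∀ w ∈ S a, #((S b).bipartiteAbove r w) = p a 1 b := by
    intro a b ha hb w hw
    rw [Finset.mem_filter] at hw
    rw [← hw.2, G.dist_comm, ← hG.card_filter hD hb, Finset.bipartiteAbove, Finset.filter_filter]
    simp only [r, G.dist_comm (u := x), and_comm]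
  have hsymm : ∀ b u, (S b).bipartiteBelow r u = (S b).bipartiteAbove r u := by
    intro b u
    simp only [Finset.bipartiteBelow, Finset.bipartiteAbove, r, G.dist_comm (v := u)]
  calc p 0 j j * p j 1 i = ∑ w ∈ S j, #((S i).bipartiteAbove r w) := by
        rw [Finset.sum_congr rfl (hcount hj hi), Finset.sum_const, hG.card_sphere hj, smul_eq_mul]
    _ = ∑ u ∈ S i, #((S j).bipartiteBelow r u) :=
        Finset.sum_card_bipartiteAbove_eq_sum_card_bipartiteBelow r
    _ = p 0 i i * p i 1 j := by
        simp_rw [hsymm]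
        rw [Finset.sum_congr rfl (hcount hi hj), Finset.sum_const, hG.card_sphere hi, smul_eq_mul]

lemma p_one_succ_pos (hG : IsDRG G D p) (hD : 1 ≤ D) {j : ℕ} (hj : j + 1 ≤ D) :
    0 < p j 1 (j + 1) := by
  have h := Nat.mul_pos (hG.p_zero_pos hj) (hG.p_succ_one_pos hj)
  rw [← hG.p_zero_mul_p_one_comm hD hj (by omega)] at h
  exact Nat.pos_of_mul_pos_left h

lemma distMat_one_mul_distMat (hG : IsDRG G D p) (hD : 1 ≤ D) {i : ℕ} (hi : i ≤ D) :
    distMat G 1 * distMat G i = distComb G D (fun h => p h 1 i) := by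
  ext u v
  rw [distComb_apply hG.dist_le, Matrix.mul_apply, ← hG.card_filter hD hi, ← sum_boole]
  refine sum_congr rfl fun w _ => ?_
  rw [← Nat.cast_one, distMat_natCast_apply, distMat_natCast_apply, ite_zero_mul_ite_zero, one_mul]

lemma distMat_one_mul_distComb (hG : IsDRG G D p) (hD : 1 ≤ D) (y : ℕ → ℂ) :
    distMat G 1 * distComb G D y
      = distComb G D (fun j => ∑ i ∈ range (D + 1), (p j 1 i : ℂ) * y i) := by
  ext u v
  rw [distComb_apply hG.dist_le, distComb, Matrix.mul_sum, Matrix.sum_apply]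
  refine sum_congr rfl fun i hi => ?_
  rw [Matrix.mul_smul, hG.distMat_one_mul_distMat hD (Nat.lt_succ_iff.1 (mem_range.1 hi)),
    Matrix.smul_apply, distComb_apply hG.dist_le, smul_eq_mul, mul_comm]

lemma distComb_mem_span_distMat_iff (hG : IsDRG G D p) (z : ℕ → ℂ) :
    distComb G D z ∈ Submodule.span ℂ {distMat G D} ↔ ∀ j < D, z j = 0 := by
  rw [Submodule.mem_span_singleton]
  constructor
  · rintro ⟨c, hc⟩ j hj
    obtain ⟨u, v, huv⟩ := hG.exists_dist_eq hj.le
    have := congr_fun₂ hc u v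
    rwa [Matrix.smul_apply, distMat_natCast_apply, distComb_apply hG.dist_le, huv,
      if_neg hj.ne, smul_zero, eq_comm] at this
  · refine fun hz => ⟨z D, ?_⟩
    ext u v
    rw [Matrix.smul_apply, distMat_natCast_apply, distComb_apply hG.dist_le]
    rcases (hG.dist_le u v).lt_or_eq with huv | huv
    · rw [if_neg huv.ne, hz _ huv, smul_zero]
    · rw [if_pos huv, huv, smul_eq_mul, mul_one]

lemma distComb_ne_zero (hG : IsDRG G D p) {y : ℕ → ℂ} (h0 : y 0 ≠ 0) : distComb G D y ≠ 0 := by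
  obtain ⟨x, -⟩ := hG.exists_dist_eq (Nat.zero_le D)
  intro h
  have := congr_fun₂ h x x
  rw [distComb_apply hG.dist_le, G.dist_self, Matrix.zero_apply] at this
  exact h0 this

lemma eq_zero_of_isPseudoCoeff (hG : IsDRG G D p) (hD : 1 ≤ D) {θ : ℂ} {y : ℕ → ℂ}
    (hy : IsPseudoCoeff D p θ y) (h0 : y 0 = 0) {j : ℕ} (hj : j ≤ D) : y j = 0 := by
  induction j using Nat.strong_induction_on with
  | _ j ih =>
  rcases j with _ | m
  · exact h0
  have hsum : ∑ i ∈ range (D + 1), (p m 1 i : ℂ) * y i = p m 1 (m + 1) * y (m + 1) := by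
    refine sum_eq_single (m + 1) (fun i hi hne => ?_) (fun h => (h (mem_range.2 (by omega))).elim)
    rcases (show i ≤ m ∨ m + 1 < i by omega) with hle | hlt
    · rw [ih i (by omega) (by omega), mul_zero]
    · rw [hG.p_one_eq_zero hD (by omega) (Nat.lt_succ_iff.1 (mem_range.1 hi)) (.inl hlt),
        Nat.cast_zero, zero_mul]
  have hb : (p m 1 (m + 1) : ℂ) ≠ 0 := by exact_mod_cast (hG.p_one_succ_pos hD hj).ne'
  have hm := hy m (by omega)
  rw [hsum, ih m (by omega) (by omega), mul_zero] at hm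
  exact (mul_eq_zero.1 hm).resolve_left hb

lemma eq_mul_of_isPseudoCoeff (hG : IsDRG G D p) (hD : 1 ≤ D) {θ : ℂ} {y z : ℕ → ℂ}
    (hy : IsPseudoCoeff D p θ y) (hz : IsPseudoCoeff D p θ z) (hz0 : z 0 = 1) {j : ℕ}
    (hj : j ≤ D) : y j = y 0 * z j := by
  have := hG.eq_zero_of_isPseudoCoeff hD (hy.sub_smul hz (y 0)) (by simp [hz0]) hj
  rwa [Pi.sub_apply, Pi.smul_apply, smul_eq_mul, sub_eq_zero] at this

lemma sum_p_one_mul_eval (hG : IsDRG G D p) (hD : 1 ≤ D) {f : ℕ → ℂ[X]}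
    (hfrec0 : Polynomial.X * f 0 = C (p 0 1 0 : ℂ) * f 0 + C (p 1 1 0 : ℂ) * f 1)
    (hfrec : ∀ j : ℕ, 1 ≤ j → j ≤ D - 1 →
      Polynomial.X * f j = C (p (j - 1) 1 j : ℂ) * f (j - 1) + C (p j 1 j : ℂ) * f j +
        C (p (j + 1) 1 j : ℂ) * f (j + 1))
    (θ : ℂ) {j : ℕ} (hj : j < D) :
    ∑ i ∈ range (D + 1), (p i 1 j : ℂ) * (f i).eval θ = θ * (f j).eval θ := by
  have hreduce : ∀ s ⊆ range (D + 1), (∀ i ≤ D, i ≤ j + 1 → j ≤ i + 1 → i ∈ s) →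
      ∑ i ∈ range (D + 1), (p i 1 j : ℂ) * (f i).eval θ
        = ∑ i ∈ s, (p i 1 j : ℂ) * (f i).eval θ := by
    refine fun s hs hcover => (sum_subset hs fun i hi his => ?_).symm
    have hiD := Nat.lt_succ_iff.1 (mem_range.1 hi)
    have hfar : i + 1 < j ∨ j + 1 < i := by
      by_contra
      exact his (hcover i hiD (by omega) (by omega))
    rw [hG.p_one_eq_zero hD hiD hj.le hfar, Nat.cast_zero, zero_mul]
  rcases j with _ | m
  · have he := congrArg (eval θ) hfrec0
    simp only [eval_mul, eval_add, eval_X, eval_C] at he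
    rw [hreduce {0, 1} (by intro i; simp only [mem_insert, mem_singleton, mem_range]; omega)
      (by intro i; simp only [mem_insert, mem_singleton]; omega), sum_pair zero_ne_one, he]
  · have he := congrArg (eval θ) (hfrec (m + 1) (by omega) (by omega))
    simp only [eval_mul, eval_add, eval_X, eval_C, Nat.add_sub_cancel] at he
    rw [hreduce {m, m + 1, m + 2}
      (by intro i; simp only [mem_insert, mem_singleton, mem_range]; omega)
      (by intro i; simp only [mem_insert, mem_singleton]; omega),
      sum_insert (by simp), sum_pair (by simp), he, add_assoc]

lemma isPseudoCoeff_mul_inv (hG : IsDRG G D p) (hD : 1 ≤ D) {θ : ℂ} {g : ℕ → ℂ}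
    (hg : ∀ j < D, ∑ i ∈ range (D + 1), (p i 1 j : ℂ) * g i = θ * g j) :
    IsPseudoCoeff D p θ (fun i => g i * (p 0 i i : ℂ)⁻¹) := by
  intro j hj
  have hk : ∀ {i}, i ≤ D → (p 0 i i : ℂ) ≠ 0 := fun hi => by exact_mod_cast (hG.p_zero_pos hi).ne'
  calc ∑ i ∈ range (D + 1), (p j 1 i : ℂ) * (g i * (p 0 i i : ℂ)⁻¹)
      = ∑ i ∈ range (D + 1), (p i 1 j : ℂ) * g i * (p 0 j j : ℂ)⁻¹ := by
        refine sum_congr rfl fun i hi => ?_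
        have hiD := Nat.lt_succ_iff.1 (mem_range.1 hi)
        have hcomm : (p 0 j j * p j 1 i : ℂ) = p 0 i i * p i 1 j := by
          exact_mod_cast hG.p_zero_mul_p_one_comm hD hiD hj.le
        field_simp [hk hiD, hk hj.le]
        linear_combination g i * hcomm
    _ = θ * (g j * (p 0 j j : ℂ)⁻¹) := by
        rw [← sum_mul, hg j hj, mul_assoc]

variable [DecidableEq V]

lemma distMat_mem_bmAlg (hG : IsDRG G D p) (hD : 1 ≤ D) {i : ℕ} (hi : i ≤ D) :
    distMat G i ∈ bmAlg G := by
  have hA : distMat G 1 ∈ bmAlg G := Algebra.subset_adjoin rfl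
  induction i using Nat.strong_induction_on with
  | _ i ih =>
  rcases i with _ | _ | m
  · rw [Nat.cast_zero, distMat_zero hG.1]
    exact one_mem _
  · exact hA
  · -- `A A_{m+1} = ∑ₕ p^h_{1,m+1} Aₕ`, where `A_{m+2}` is the only term not yet known to lie in `M`
    have hexp := hG.distMat_one_mul_distMat hD (i := m + 1) (by omega)
    rw [distComb, ← add_sum_erase _ _ (mem_range.2 (by omega : m + 2 < D + 1))] at hexp
    have hc : (p (m + 2) 1 (m + 1) : ℂ) ≠ 0 := by exact_mod_cast (hG.p_succ_one_pos hi).ne'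
    rw [← inv_smul_smul₀ hc (distMat G _), eq_sub_of_add_eq hexp.symm]
    refine Subalgebra.smul_mem _ (sub_mem (mul_mem hA (ih _ (by omega) (by omega)))
      (sum_mem fun h hh => ?_)) _
    obtain ⟨hne, hh⟩ := mem_erase.1 hh
    have hhD := Nat.lt_succ_iff.1 (mem_range.1 hh)
    rcases (show h ≤ m + 1 ∨ m + 2 < h by omega) with hle | hlt
    · exact Subalgebra.smul_mem _ (ih h (by omega) hhD) _
    · rw [hG.p_one_eq_zero hD hhD (by omega) (.inr (by omega)), Nat.cast_zero, zero_smul]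
      exact zero_mem _

lemma distComb_mem_bmAlg (hG : IsDRG G D p) (hD : 1 ≤ D) (y : ℕ → ℂ) :
    distComb G D y ∈ bmAlg G :=
  sum_mem fun _ hi =>
    Subalgebra.smul_mem _ (hG.distMat_mem_bmAlg hD (Nat.lt_succ_iff.1 (mem_range.1 hi))) _

lemma exists_eq_distComb_of_mem_bmAlg (hG : IsDRG G D p) (hD : 1 ≤ D) {Y : Matrix V V ℂ}
    (hY : Y ∈ bmAlg G) : ∃ y, Y = distComb G D y := by
  have hpow : ∀ n, ∃ y, distMat G 1 ^ n = distComb G D y := by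
    intro n
    induction n with
    | zero =>
      refine ⟨Pi.single 0 1, ?_⟩
      rw [pow_zero, ← distMat_zero hG.1]
      exact_mod_cast distMat_eq_distComb hG.dist_le 0
    | succ n ih =>
      obtain ⟨y, hy⟩ := ih
      exact ⟨_, by rw [pow_succ', hy, hG.distMat_one_mul_distComb hD]⟩
  rw [bmAlg, Algebra.adjoin_singleton_eq_range_aeval] at hY
  obtain ⟨q, rfl⟩ := hY
  change ∃ y, aeval (distMat G 1) q = distComb G D y
  induction q using Polynomial.induction_on' with
  | add q r hq hr =>
    obtain ⟨y, hy⟩ := hq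
    obtain ⟨z, hz⟩ := hr
    exact ⟨y + z, by rw [map_add, hy, hz, distComb_add]⟩
  | monomial n a =>
    obtain ⟨y, hy⟩ := hpow n
    exact ⟨a • y, by rw [aeval_monomial, ← Algebra.smul_def, hy, distComb_smul]⟩

lemma distComb_mem_pseudoSpace_iff (hG : IsDRG G D p) (hD : 1 ≤ D) (θ : ℂ) (y : ℕ → ℂ) :
    distComb G D y ∈ pseudoSpace G D θ ↔ IsPseudoCoeff D p θ y := by
  have hshift : (distMat G 1 - θ • 1) * distComb G D y
      = distComb G D (fun j => ∑ i ∈ range (D + 1), (p j 1 i : ℂ) * y i - θ * y j) := by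
    rw [sub_mul, smul_mul_assoc, one_mul, hG.distMat_one_mul_distComb hD]
    ext u v
    simp [distComb_apply hG.dist_le]
  simp only [pseudoSpace, Submodule.mem_inf, Subalgebra.mem_toSubmodule,
    hG.distComb_mem_bmAlg hD, Submodule.mem_comap, LinearMap.mulLeft_apply, hshift,
    hG.distComb_mem_span_distMat_iff, sub_eq_zero, true_and, IsPseudoCoeff]

end IsDRG

/-- For every `θ ∈ ℂ`, the matrix `F = ∑_{i=0}^{D} fᵢ(θ) kᵢ⁻¹ Aᵢ` is a
basis for `M(θ)`: it is a nonzero element of `M(θ)` and `M(θ)` is its `ℂ`-span. -/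
theorem stmt9 (G : SimpleGraph X) (D : ℕ) (p : ℕ → ℕ → ℕ → ℕ)
    (hdrg : IsDRG G D p) (hD : 3 ≤ D)
    (f : ℕ → Polynomial ℂ) (hf0 : f 0 = 1)
    (hfrec0 : Polynomial.X * f 0 =
      Polynomial.C (p 0 1 0 : ℂ) * f 0 + Polynomial.C (p 1 1 0 : ℂ) * f 1)
    (hfrec : ∀ j : ℕ, 1 ≤ j → j ≤ D - 1 →
      Polynomial.X * f j =
        Polynomial.C (p (j - 1) 1 j : ℂ) * f (j - 1) +
        Polynomial.C (p j 1 j : ℂ) * f j +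
        Polynomial.C (p (j + 1) 1 j : ℂ) * f (j + 1))
    (θ : ℂ) (F : Matrix X X ℂ)
    (hF : F = ∑ i ∈ Finset.range (D + 1),
      ((f i).eval θ * ((p 0 i i : ℂ))⁻¹) • distMat G (i : ℤ)) :
    F ≠ 0 ∧ F ∈ pseudoSpace G D θ ∧ pseudoSpace G D θ = Submodule.span ℂ {F} := by
  have hD1 : 1 ≤ D := by omega
  set y : ℕ → ℂ := fun i => (f i).eval θ * ((p 0 i i : ℂ))⁻¹
  have hFy : F = distComb G D y := hF
  have hy0 : y 0 = 1 := by simp [y, hf0, hdrg.p_zero_zero_zero]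
  have hy : IsPseudoCoeff D p θ y :=
    hdrg.isPseudoCoeff_mul_inv hD1 fun _ => hdrg.sum_p_one_mul_eval hD1 hfrec0 hfrec θ
  have hFmem : F ∈ pseudoSpace G D θ := hFy ▸ (hdrg.distComb_mem_pseudoSpace_iff hD1 θ y).2 hy
  refine ⟨hFy ▸ hdrg.distComb_ne_zero (hy0 ▸ one_ne_zero), hFmem,
    le_antisymm (fun Y hY => ?_) ((Submodule.span_singleton_le_iff_mem _ _).2 hFmem)⟩
  obtain ⟨z, rfl⟩ := hdrg.exists_eq_distComb_of_mem_bmAlg hD1 (Submodule.mem_inf.1 hY).1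
  have hz := (hdrg.distComb_mem_pseudoSpace_iff hD1 θ z).1 hY
  refine Submodule.mem_span_singleton.2 ⟨z 0, ?_⟩
  rw [hFy, ← distComb_smul]
  exact distComb_congr fun j hj => (hdrg.eq_mul_of_isPseudoCoeff hD1 hz hy hy0 hj).symm
end
end

section
/- If θ and θ' are distinct complex numbers, then M(θ) ∩ M(θ') = 0; moreover, for every θ ∈ ℂ, M(θ) ∩ M(∞) = 0, where M(∞) = ℂA_D. -/
open Matrix Polynomial BigOperators

noncomputable section

variable {X : Type*} [Fintype X] [DecidableEq X]

/-! The matrix `A A_D` is not a multiple of `A_D`: for `y, z` at distance `D` and a neighbour `w`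
of `z` on a geodesic towards `y`, the `(w, y)` entry of `A A_D` counts `z`, while `A_D` vanishes
there. Hence no nonzero multiple of `A_D` lies in any `M(θ)`, and an element of `M(θ) ∩ M(θ')`
is, up to the factor `θ' - θ`, the difference of two multiples of `A_D`. -/

namespace SimpleGraph

variable {V : Type*} {G : SimpleGraph V}

lemma exists_adj_dist_eq_dist_sub_one {u v : V} (h : G.dist u v ≠ 0) :
    ∃ w, G.Adj u w ∧ G.dist w v = G.dist u v - 1 := by
  obtain ⟨p, hp⟩ := exists_walk_of_dist_ne_zero h
  cases p with
  | nil => simp at h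
  | @cons _ w _ hadj q =>
    refine ⟨w, hadj, le_antisymm ?_ ?_⟩
    · simpa [← hp] using dist_le q
    · have := q.reachable.dist_triangle_right u
      rw [dist_eq_one_iff_adj.mpr hadj] at this
      omega

end SimpleGraph

section

variable {V : Type*} (G : SimpleGraph V)

lemma distMat_apply_of_dist_ne {i : ℤ} {y z : V} (h : (G.dist y z : ℤ) ≠ i) :
    distMat G i y z = 0 :=
  if_neg h

lemma distMat_mul_distMat_apply [Fintype V] (i j : ℤ) (y z : V) :
    (distMat G i * distMat G j) y z =
      (Finset.univ.filter fun w => (G.dist y w : ℤ) = i ∧ (G.dist w z : ℤ) = j).card := by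
  simp only [mul_apply, distMat, of_apply, Finset.card_filter, Nat.cast_sum]
  refine Finset.sum_congr rfl fun w _ => ?_
  split_ifs <;> simp_all

lemma distMat_one_mul_distMat_notMem_span [Fintype V] {D : ℕ} {y z : V}
    (hyz : G.dist y z = D) (hD : D ≠ 0) :
    distMat G 1 * distMat G D ∉ Submodule.span ℂ {distMat G D} := by
  have hzy : G.dist z y = D := G.dist_comm.trans hyz
  obtain ⟨w, hadj, hwy⟩ := G.exists_adj_dist_eq_dist_sub_one (hzy ▸ hD)
  rw [hzy] at hwy
  have hz : z ∈ Finset.univ.filter fun u =>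
      (G.dist w u : ℤ) = 1 ∧ (G.dist u y : ℤ) = D := by
    simp [hzy, G.dist_comm (u := w), hadj]
  intro hspan
  obtain ⟨c, hc⟩ := Submodule.mem_span_singleton.mp hspan
  have hentry := congrFun (congrFun hc.symm w) y
  rw [distMat_mul_distMat_apply, Matrix.smul_apply,
    distMat_apply_of_dist_ne G (by omega), smul_zero, Nat.cast_eq_zero] at hentry
  exact Finset.card_ne_zero_of_mem hz hentry

end

lemma pseudoSpace_inf_span_distMat_eq_bot (G : SimpleGraph X) {D : ℕ} {y z : X}
    (hyz : G.dist y z = D) (hD : D ≠ 0) (θ : ℂ) :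
    pseudoSpace G D θ ⊓ Submodule.span ℂ {distMat G D} = ⊥ := by
  refine (Submodule.eq_bot_iff _).mpr fun Y hY => ?_
  obtain ⟨⟨-, hAY⟩, hYspan⟩ := Submodule.mem_inf.mp hY
  obtain ⟨γ, rfl⟩ := Submodule.mem_span_singleton.mp hYspan
  rcases eq_or_ne γ 0 with rfl | hγ
  · exact zero_smul _ _
  refine absurd ((Submodule.smul_mem_iff _ hγ).mp ?_)
    (distMat_one_mul_distMat_notMem_span G hyz hD)
  have hsplit : γ • (distMat G 1 * distMat G D) =
      (distMat G 1 - θ • 1) * (γ • distMat G D) + (γ * θ) • distMat G D := by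
    simp only [sub_mul, Matrix.mul_smul, Matrix.smul_mul, one_mul, smul_smul]
    abel
  rw [hsplit]
  exact add_mem hAY (Submodule.smul_mem _ _ (Submodule.mem_span_singleton_self _))

lemma pseudoSpace_inf_pseudoSpace_le_span (G : SimpleGraph X) (D : ℕ) {θ θ' : ℂ}
    (hθ : θ ≠ θ') :
    pseudoSpace G D θ ⊓ pseudoSpace G D θ' ≤ Submodule.span ℂ {distMat G D} := by
  rintro Y ⟨⟨-, hθY⟩, ⟨-, hθ'Y⟩⟩
  have hdiff : (θ' - θ) • Y = (distMat G 1 - θ • 1) * Y - (distMat G 1 - θ' • 1) * Y := by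
    rw [← sub_mul, sub_sub_sub_cancel_left, ← sub_smul, smul_mul, one_mul]
  have hmem : (θ' - θ) • Y ∈ Submodule.span ℂ {distMat G D} := hdiff ▸ sub_mem hθY hθ'Y
  exact (Submodule.smul_mem_iff _ (sub_ne_zero.mpr hθ.symm)).mp hmem

/-- If `θ ≠ θ'` are complex numbers then `M(θ) ∩ M(θ') = 0`; moreover
for every `θ ∈ ℂ`, `M(θ) ∩ M(∞) = 0`, where `M(∞) = ℂ A_D`. -/
theorem stmt11 (G : SimpleGraph X) (D : ℕ) (p : ℕ → ℕ → ℕ → ℕ)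
    (hdrg : IsDRG G D p) (hD : 3 ≤ D) :
    (∀ θ θ' : ℂ, θ ≠ θ' → pseudoSpace G D θ ⊓ pseudoSpace G D θ' = ⊥) ∧
      ∀ θ : ℂ, pseudoSpace G D θ ⊓ Submodule.span ℂ {distMat G (D : ℤ)} = ⊥ := by
  obtain ⟨-, -, ⟨y, z, hyz⟩, -⟩ := hdrg
  have hinf := pseudoSpace_inf_span_distMat_eq_bot G hyz (by omega)
  refine ⟨fun θ θ' hθ => eq_bot_iff.mpr ?_, hinf⟩
  calc pseudoSpace G D θ ⊓ pseudoSpace G D θ'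
      ≤ pseudoSpace G D θ ⊓ Submodule.span ℂ {distMat G D} :=
        le_inf inf_le_left (pseudoSpace_inf_pseudoSpace_le_span G D hθ)
    _ = ⊥ := hinf θ
end
end

section
/- Let v be a nonzero vector in E_1*V which is an eigenvector for E_1*AE_1*, say E_1*AE_1*v = ηv. Then η ≠ −1 − b_1/(k+1); equivalently, the value η̃ associated to η is not equal to the valency k (where η̃ = −1 − b_1/(1+η) if η ≠ −1, and η̃ = ∞ if η = −1). -/
open Matrix Polynomial BigOperators

noncomputable section

variable {X : Type*} [Fintype X] [DecidableEq X]

/-!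
An eigenvalue of `E₁* A E₁*` is an eigenvalue of a `0/1` integer matrix, hence an algebraic
integer. On the other hand `1 ≤ b₁ ≤ k`, so `-1 - b₁/(k+1)` is a rational number strictly between
`-2` and `-1`, and a rational algebraic integer is an integer.
-/

namespace SimpleGraph

variable {V : Type*} {G : SimpleGraph V}

lemma dist_eq_two_of_adj_of_adj {x a b : V} (hxa : G.Adj x a) (hab : G.Adj a b)
    (hxb : ¬ G.Adj x b) (hne : x ≠ b) : G.dist x b = 2 := by
  have h : G.edist x b = 2 := edist_eq_two_iff.mpr ⟨hne, hxb, a, hxa, hab.symm⟩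
  simp [dist, h]

end SimpleGraph

section DistanceRegular

variable {V : Type*} [Fintype V] {G : SimpleGraph V} {D : ℕ} {p : ℕ → ℕ → ℕ → ℕ}

lemma IsDRG.exists_adj_adj_dist_eq_two (h : IsDRG G D p) (hD : 2 ≤ D) :
    ∃ x a b : V, G.Adj x a ∧ G.Adj a b ∧ G.dist x b = 2 := by
  obtain ⟨hconn, -, ⟨y, z, hyz⟩, -⟩ := h
  obtain ⟨W, hW⟩ := hconn.exists_walk_length_eq_dist y z
  obtain ⟨x, a, b, hxa, hab, hxb, hne⟩ := W.exists_adj_adj_not_adj_ne hW (by omega)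
  exact ⟨x, a, b, hxa, hab, SimpleGraph.dist_eq_two_of_adj_of_adj hxa hab hxb hne⟩

lemma IsDRG.b1_pos (h : IsDRG G D p) (hD : 2 ≤ D) : 0 < p 1 1 2 := by
  obtain ⟨x, a, b, hxa, hab, hxb⟩ := h.exists_adj_adj_dist_eq_two hD
  rw [← h.2.2.2 1 1 2 (by omega) (by omega) hD a x (SimpleGraph.dist_eq_one_iff_adj.mpr hxa.symm)]
  refine Finset.card_pos.mpr ⟨b, ?_⟩
  simp [SimpleGraph.dist_eq_one_iff_adj.mpr hab, SimpleGraph.dist_comm, hxb]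

lemma IsDRG.b1_le_valency (h : IsDRG G D p) (hD : 2 ≤ D) : p 1 1 2 ≤ p 0 1 1 := by
  obtain ⟨x, a, -, hxa, -⟩ := h.exists_adj_adj_dist_eq_two hD
  rw [← h.2.2.2 1 1 2 (by omega) (by omega) hD a x (SimpleGraph.dist_eq_one_iff_adj.mpr hxa.symm),
    ← h.2.2.2 0 1 1 (by omega) (by omega) (by omega) a a SimpleGraph.dist_self]
  refine Finset.card_le_card fun w hw => ?_
  simp only [Finset.mem_filter, Finset.mem_univ, true_and] at hw ⊢
  exact ⟨hw.1, SimpleGraph.dist_comm.trans hw.1⟩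

end DistanceRegular

lemma Matrix.of_ite_one_zero_mem_range_intCast (P : X → X → Prop) [∀ y z, Decidable (P y z)] :
    Matrix.of (fun y z => if P y z then (1 : ℂ) else 0) ∈ (Int.castRingHom ℂ).mapMatrix.range :=
  ⟨Matrix.of fun y z => if P y z then (1 : ℤ) else 0, by
    ext y z
    simp only [RingHom.mapMatrix_apply, map_apply, of_apply]
    split_ifs <;> simp⟩

lemma dualIdem_mul_distMat_mul_dualIdem_mem_range_intCast (G : SimpleGraph X) (x : X) (i j : ℤ) :
    dualIdem G x i * distMat G j * dualIdem G x i ∈ (Int.castRingHom ℂ).mapMatrix.range := by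
  have hE := Matrix.of_ite_one_zero_mem_range_intCast fun y z => y = z ∧ (G.dist x y : ℤ) = i
  have hA := Matrix.of_ite_one_zero_mem_range_intCast fun y z => (G.dist y z : ℤ) = j
  exact mul_mem (mul_mem hE hA) hE

lemma Matrix.isIntegral_of_mulVec_map_eq_smul {n R K : Type*} [Fintype n] [DecidableEq n]
    [CommRing R] [Field K] [Algebra R K] (M : Matrix n n R) {v : n → K} (hv : v ≠ 0) {η : K}
    (h : (M.map (algebraMap R K)) *ᵥ v = η • v) : IsIntegral R η := by
  refine ⟨M.charpoly, M.charpoly_monic, ?_⟩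
  rw [eval₂_eq_eval_map, ← charpoly_map, eval_charpoly, ← exists_mulVec_eq_zero_iff]
  exact ⟨v, hv, by rw [sub_mulVec, h, scalar_apply, ← smul_one_eq_diagonal, smul_mulVec,
    one_mulVec, sub_self]⟩

lemma Rat.exists_eq_intCast_of_isIntegral {K : Type*} [Field K] [CharZero K] {q : ℚ}
    (h : IsIntegral ℤ (q : K)) : ∃ m : ℤ, q = m := by
  rw [← eq_ratCast (algebraMap ℚ K),
    isIntegral_algebraMap_iff (algebraMap ℚ K).injective] at h
  obtain ⟨m, hm⟩ := IsIntegrallyClosed.isIntegral_iff.mp h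
  exact ⟨m, by simp [← hm]⟩

lemma neg_one_sub_div_add_one_ne_intCast {b k : ℕ} (hb : 0 < b) (hbk : b ≤ k) (m : ℤ) :
    -1 - (b : ℚ) / (k + 1) ≠ m := by
  intro h
  have hk : (0 : ℚ) < k + 1 := by positivity
  have hlt : (0 : ℚ) < b / (k + 1) := by positivity
  have hlt' : (b : ℚ) / (k + 1) < 1 := by
    rw [div_lt_one hk]; exact_mod_cast Nat.lt_succ_of_le hbk
  have : (-2 : ℚ) < m ∧ (m : ℚ) < -1 := by constructor <;> linarith
  norm_cast at this
  omega

theorem stmt13_general (G : SimpleGraph X) (D : ℕ) (p : ℕ → ℕ → ℕ → ℕ)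
    (hdrg : IsDRG G D p) (hD : 3 ≤ D) (x : X)
    (v : X → ℂ) (hv : v ≠ 0)
    (η : ℂ)
    (heig : (dualIdem G x 1 * distMat G 1 * dualIdem G x 1).mulVec v = η • v) :
    η ≠ -1 - (p 1 1 2 : ℂ) / ((p 0 1 1 : ℂ) + 1) := by
  intro hη
  obtain ⟨M, hM⟩ := dualIdem_mul_distMat_mul_dualIdem_mem_range_intCast G x 1 1
  rw [← hM, RingHom.mapMatrix_apply, ← algebraMap_int_eq] at heig
  have hq : ((-1 - (p 1 1 2 : ℚ) / (p 0 1 1 + 1) : ℚ) : ℂ) = η := by rw [hη]; push_cast; ring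
  obtain ⟨m, hm⟩ := Rat.exists_eq_intCast_of_isIntegral
    (hq ▸ M.isIntegral_of_mulVec_map_eq_smul hv heig)
  exact neg_one_sub_div_add_one_ne_intCast (hdrg.b1_pos (by omega))
    (hdrg.b1_le_valency (by omega)) m hm

/-- Let `v` be a nonzero vector in `E₁* V` which is an eigenvector for
`E₁* A E₁*` with eigenvalue `η`.  Then `η ≠ -1 - b₁/(k+1)`, i.e. `η̃ ≠ k`
(here `b₁ = p 1 1 2` and `k = p 0 1 1` is the valency). -/
theorem stmt13 (G : SimpleGraph X) (D : ℕ) (p : ℕ → ℕ → ℕ → ℕ)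
    (hdrg : IsDRG G D p) (hD : 3 ≤ D) (x : X)
    (v : X → ℂ) (hv : v ≠ 0) (hvE1 : (dualIdem G x 1).mulVec v = v)
    (η : ℂ)
    (heig : (dualIdem G x 1 * distMat G 1 * dualIdem G x 1).mulVec v = η • v) :
    η ≠ -1 - (p 1 1 2 : ℂ) / ((p 0 1 1 : ℂ) + 1) :=
  stmt13_general G D p hdrg hD x v hv η heig
end
end

section
/- Let θ_0 > θ_1 > ⋯ > θ_D denote the distinct eigenvalues of the adjacency matrix A. Let v be a nonzero vector in E_1*V which is orthogonal to s_1 and is an eigenvector for E_1*AE_1*, say E_1*AE_1*v = ηv, with η ≠ −1. Suppose −1 − b_1/(1+θ_1) < η < −1 − b_1/(1+θ_D) (here θ_D < −1 < θ_1, so both bounds are defined). Then η̃ = −1 − b_1/(1+η) is not an eigenvalue of A. -/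
/-!
Suppose `η̃ = -1 - b₁/(1+η)` equals some `θ_j`. The map `t ↦ -1 - b₁/(1+t)` is an involution,
increasing on each side of `-1`, so `θ_D ≤ η̃ ≤ θ_1` would put `η` outside the open interval of
the hypothesis; hence `j = 0` and `η̃ = θ₀ = k`, the valency. Then `η = -1 - b₁/(k+1)` is a
rational number strictly between `-2` and `-1` (as `1 ≤ b₁ ≤ k`), while as an eigenvalue of the
integer matrix `E₁* A E₁*` it is an algebraic integer.
-/

open Matrix Polynomial BigOperators

noncomputable section

variable {X : Type*} [Fintype X] [DecidableEq X]

namespace Matrix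

variable {n K : Type*} [Fintype n] [DecidableEq n] [Field K]

theorem mem_spectrum_of_mulVec_eq_smul {A : Matrix n n K} {μ : K} {w : n → K} (hw : w ≠ 0)
    (h : A *ᵥ w = μ • w) : μ ∈ spectrum K A := by
  rw [← Matrix.spectrum_toLin']
  exact (Module.End.hasEigenvalue_of_hasEigenvector
    (Module.End.hasEigenvector_iff.2 ⟨Module.End.mem_eigenspace_iff.2 h, hw⟩)).mem_spectrum

theorem exists_mulVec_eq_smul_of_mem_spectrum {A : Matrix n n K} {μ : K}
    (h : μ ∈ spectrum K A) : ∃ w ≠ 0, A *ᵥ w = μ • w := by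
  rw [← Matrix.spectrum_toLin', ← Module.End.hasEigenvalue_iff_mem_spectrum] at h
  obtain ⟨w, hw⟩ := h.exists_hasEigenvector
  exact ⟨w, hw.2, Module.End.mem_eigenspace_iff.1 hw.1⟩

theorem isIntegral_of_mem_spectrum_map {R : Type*} [CommRing R] [Algebra R K]
    (B : Matrix n n R) {μ : K} (h : μ ∈ spectrum K (B.map (algebraMap R K))) :
    IsIntegral R μ :=
  ⟨B.charpoly, B.charpoly_monic, by
    rw [← Polynomial.eval_map, ← Matrix.charpoly_map]
    exact Matrix.mem_spectrum_iff_isRoot_charpoly.1 h⟩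

end Matrix

namespace SimpleGraph.IsRegularOfDegree

variable {V 𝕜 : Type*} [Fintype V] [DecidableEq V] {G : SimpleGraph V} [DecidableRel G.Adj]
  {d : ℕ}

theorem natCast_mem_spectrum_adjMatrix [Field 𝕜] [Nonempty V] (hd : G.IsRegularOfDegree d) :
    (d : 𝕜) ∈ spectrum 𝕜 (G.adjMatrix 𝕜) := by
  refine Matrix.mem_spectrum_of_mulVec_eq_smul (w := Function.const V 1) ?_ ?_
  · simp
  · ext v
    simp [hd v]

theorem norm_le_of_mem_spectrum_adjMatrix [NormedField 𝕜] (hd : G.IsRegularOfDegree d)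
    {μ : 𝕜} (hμ : μ ∈ spectrum 𝕜 (G.adjMatrix 𝕜)) : ‖μ‖ ≤ d := by
  obtain ⟨w, hw, hμw⟩ := Matrix.exists_mulVec_eq_smul_of_mem_spectrum hμ
  obtain ⟨y₀, hy₀⟩ := Function.ne_iff.1 hw
  have : Nonempty V := ⟨y₀⟩
  obtain ⟨y, hy⟩ := Finite.exists_max (fun y => ‖w y‖)
  have hwy : 0 < ‖w y‖ := (norm_pos_iff.2 hy₀).trans_le (hy y₀)
  refine le_of_mul_le_mul_right ?_ hwy
  calc ‖μ‖ * ‖w y‖ = ‖∑ u ∈ G.neighborFinset y, w u‖ := by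
        rw [← norm_mul, ← adjMatrix_mulVec_apply, hμw, Pi.smul_apply, smul_eq_mul]
    _ ≤ ∑ u ∈ G.neighborFinset y, ‖w u‖ := norm_sum_le _ _
    _ ≤ ∑ _u ∈ G.neighborFinset y, ‖w y‖ := Finset.sum_le_sum fun u _ => hy u
    _ = d * ‖w y‖ := by rw [Finset.sum_const, card_neighborFinset_eq_degree, hd y, nsmul_eq_mul]

end SimpleGraph.IsRegularOfDegree

theorem not_isIntegral_neg_one_sub_div {K : Type*} [Field K] [CharZero K] {b k : ℕ}
    (hb : 0 < b) (hbk : b ≤ k) : ¬ IsIntegral ℤ (-1 - (b : K) / (k + 1)) := by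
  intro h
  have hq : (-1 - (b : K) / (k + 1)) = ((-1 - (b : ℚ) / (k + 1) : ℚ) : K) := by push_cast; rfl
  rw [hq, IsIntegral.ratCast_iff] at h
  obtain ⟨m, hm⟩ := (IsIntegral.exists_int_iff_exists_rat h).1 ⟨_, rfl⟩
  have hfrac : 0 < (b : ℚ) / (k + 1) ∧ (b : ℚ) / (k + 1) < 1 := by
    refine ⟨by positivity, (div_lt_one (by positivity)).2 ?_⟩
    exact_mod_cast Nat.lt_succ_of_le hbk
  have h1 : (m : ℚ) < -1 := by linarith
  have h2 : (-2 : ℚ) < m := by linarith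
  norm_cast at h1 h2
  omega

theorem not_lt_and_lt_of_neg_one_sub_div_mem_Icc {b η lo hi : ℝ} (hb : 0 < b) (hη : η ≠ -1)
    (h : -1 - b / (1 + η) ∈ Set.Icc lo hi) :
    ¬ (-1 - b / (1 + hi) < η ∧ η < -1 - b / (1 + lo)) := by
  rintro ⟨hlow, hhigh⟩
  set t := -1 - b / (1 + η)
  have ht : (1 + t) * (1 + η) = -b := by
    have : 1 + η ≠ 0 := fun h0 => hη (by linarith)
    simp only [t]; field_simp; ring
  rcases lt_or_gt_of_ne hη with hneg | hpos
  · have hhi : 0 < 1 + hi := by nlinarith [h.2]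
    have : -b < (1 + η) * (1 + hi) := by
      rw [← div_lt_iff₀ hhi, neg_div]; linarith
    nlinarith [mul_le_mul_of_nonpos_left (add_le_add_left h.2 1) (by linarith : 1 + η ≤ 0)]
  · have hlo : 1 + lo < 0 := by nlinarith [h.1]
    have : -b < (1 + η) * (1 + lo) := by
      rw [← lt_div_iff_of_neg hlo, neg_div]; linarith
    nlinarith [mul_le_mul_of_nonneg_left (add_le_add_left h.1 1) (by linarith : (0:ℝ) ≤ 1 + η)]

theorem neg_one_sub_div_neg_one_sub_div {b η : ℝ} (hb : b ≠ 0) :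
    -1 - b / (1 + (-1 - b / (1 + η))) = η := by
  rw [show 1 + (-1 - b / (1 + η)) = -(b / (1 + η)) by ring, div_neg, div_div_cancel₀ hb]
  ring

theorem neg_one_sub_div_ne_natCast {b k : ℕ} {η : ℝ} (hb : 0 < b) (hbk : b ≤ k)
    (hint : IsIntegral ℤ (η : ℂ)) : -1 - (b : ℝ) / (1 + η) ≠ k := by
  intro hk
  have hηk := neg_one_sub_div_neg_one_sub_div (b := b) (η := η) (by positivity)
  rw [hk, add_comm] at hηk
  rw [← hηk] at hint
  push_cast at hint
  exact not_isIntegral_neg_one_sub_div hb hbk hint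

theorem distMat_one_eq_adjMatrix {X : Type*} (G : SimpleGraph X) [DecidableRel G.Adj] :
    distMat G 1 = G.adjMatrix ℂ := by
  ext y z
  simp [distMat, SimpleGraph.adjMatrix_apply, ← SimpleGraph.dist_eq_one_iff_adj]

theorem distMat_mem_range_mapMatrix {X : Type*} [Fintype X] [DecidableEq X] (G : SimpleGraph X)
    (i : ℤ) :
    distMat G i ∈ (algebraMap ℤ ℂ).mapMatrix.range :=
  ⟨Matrix.of fun y z => if (G.dist y z : ℤ) = i then 1 else 0, by ext; simp [distMat]⟩

theorem dualIdem_mem_range_mapMatrix {X : Type*} [Fintype X] [DecidableEq X] (G : SimpleGraph X)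
    (x : X) (i : ℤ) :
    dualIdem G x i ∈ (algebraMap ℤ ℂ).mapMatrix.range :=
  ⟨Matrix.of fun y z => if y = z ∧ (G.dist x y : ℤ) = i then 1 else 0, by ext; simp [dualIdem]⟩

theorem dualIdem_mul_distMat_mul_dualIdem_mem_range_mapMatrix {X : Type*} [Fintype X]
    [DecidableEq X] (G : SimpleGraph X) (x : X) (i j k : ℤ) :
    dualIdem G x i * distMat G j * dualIdem G x k ∈ (algebraMap ℤ ℂ).mapMatrix.range :=
  Subring.mul_mem _ (Subring.mul_mem _ (dualIdem_mem_range_mapMatrix G x i)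
    (distMat_mem_range_mapMatrix G j)) (dualIdem_mem_range_mapMatrix G x k)

namespace IsDRG

variable {X : Type*} [Fintype X] {G : SimpleGraph X} {D : ℕ} {p : ℕ → ℕ → ℕ → ℕ}

theorem isRegularOfDegree [DecidableRel G.Adj] (h : IsDRG G D p) (hD : 1 ≤ D) :
    G.IsRegularOfDegree (p 0 1 1) := by
  intro y
  rw [← SimpleGraph.card_neighborFinset_eq_degree,
    ← h.2.2.2 0 1 1 (Nat.zero_le _) hD hD y y SimpleGraph.dist_self,
    SimpleGraph.neighborFinset_eq_filter]
  congr 1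
  ext w
  simp [SimpleGraph.dist_eq_one_iff_adj, SimpleGraph.adj_comm]

theorem exists_adj_adj_dist_eq_two_s14 (h : IsDRG G D p) (hD : 2 ≤ D) :
    ∃ a b c, G.Adj a b ∧ G.Adj b c ∧ G.dist a c = 2 := by
  obtain ⟨hconn, -, ⟨y, z, hyz⟩, -⟩ := h
  obtain ⟨w, hw⟩ := hconn.exists_walk_length_eq_dist y z
  obtain ⟨a, b, c, hab, hbc, hac, hne⟩ := w.exists_adj_adj_not_adj_ne hw (by omega)
  refine ⟨a, b, c, hab, hbc, le_antisymm ?_ (hconn.one_lt_dist_of_ne_of_not_adj hne hac)⟩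
  simpa using SimpleGraph.dist_le (hab.toWalk.append hbc.toWalk)

theorem one_le_p112_and_p112_le_p011 (h : IsDRG G D p) (hD : 2 ≤ D) :
    1 ≤ p 1 1 2 ∧ p 1 1 2 ≤ p 0 1 1 := by
  obtain ⟨a, b, c, hab, hbc, hac⟩ := h.exists_adj_adj_dist_eq_two_s14 hD
  have hcount := h.2.2.2
  rw [← hcount 1 1 2 (by omega) (by omega) hD b c (SimpleGraph.dist_eq_one_iff_adj.2 hbc),
    ← hcount 0 1 1 (by omega) (by omega) (by omega) b b SimpleGraph.dist_self]
  refine ⟨Finset.card_pos.2 ⟨a, ?_⟩, Finset.card_le_card fun w hw => ?_⟩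
  · simpa [SimpleGraph.dist_eq_one_iff_adj] using ⟨hab.symm, hac⟩
  · simp only [Finset.mem_filter, Finset.mem_univ, true_and] at hw ⊢
    exact ⟨hw.1, SimpleGraph.dist_comm.trans hw.1⟩

end IsDRG

theorem stmt14_general (G : SimpleGraph X) (D : ℕ) (p : ℕ → ℕ → ℕ → ℕ)
    (hdrg : IsDRG G D p) (hD : 3 ≤ D) (x : X)
    (θ : ℕ → ℝ)
    (hmono : ∀ i j : ℕ, i < j → j ≤ D → θ j < θ i)
    (hall : ∀ μ : ℂ, μ ∈ spectrum ℂ (distMat G 1) → ∃ i : ℕ, i ≤ D ∧ μ = (θ i : ℂ))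
    (v : X → ℂ) (hv : v ≠ 0)
    (η : ℝ)
    (heig : (dualIdem G x 1 * distMat G 1 * dualIdem G x 1).mulVec v = (η : ℂ) • v)
    (hη : η ≠ -1)
    (hlow : -1 - (p 1 1 2 : ℝ) / (1 + θ 1) < η)
    (hhigh : η < -1 - (p 1 1 2 : ℝ) / (1 + θ D)) :
    ((-1 - (p 1 1 2 : ℝ) / (1 + η) : ℝ) : ℂ) ∉ spectrum ℂ (distMat G 1) := by
  classical
  intro hmem
  have : Nonempty X := ⟨x⟩
  have hanti : ∀ i j, i ≤ j → j ≤ D → θ j ≤ θ i := fun i j hij hjD =>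
    hij.eq_or_lt.elim (fun h => h ▸ le_rfl) fun h => (hmono i j h hjD).le
  obtain ⟨hb, hbk⟩ := hdrg.one_le_p112_and_p112_le_p011 (by omega)
  have hreg := hdrg.isRegularOfDegree (by omega)
  have hη_int : IsIntegral ℤ (η : ℂ) := by
    obtain ⟨B, hB⟩ := dualIdem_mul_distMat_mul_dualIdem_mem_range_mapMatrix G x 1 1 1
    refine B.isIntegral_of_mem_spectrum_map ?_
    rw [← RingHom.mapMatrix_apply, hB]
    exact Matrix.mem_spectrum_of_mulVec_eq_smul hv heig
  have hne := neg_one_sub_div_ne_natCast hb hbk hη_int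
  rw [distMat_one_eq_adjMatrix] at hmem hall
  have hle : -1 - (p 1 1 2 : ℝ) / (1 + η) ≤ p 0 1 1 :=
    (le_abs_self _).trans <| by
      simpa only [Complex.norm_real, Real.norm_eq_abs] using
        hreg.norm_le_of_mem_spectrum_adjMatrix hmem
  obtain ⟨j, hjD, hj⟩ := hall _ hmem
  obtain ⟨i, hiD, hi⟩ := hall _ hreg.natCast_mem_spectrum_adjMatrix
  rw [Complex.ofReal_inj] at hj
  have hi : (p 0 1 1 : ℝ) = θ i := by exact_mod_cast hi
  have hj1 : 1 ≤ j := Nat.one_le_iff_ne_zero.2 fun hj0 => hne <| hle.antisymm <| by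
    rw [hi, hj, hj0]; exact hanti 0 i (Nat.zero_le _) hiD
  refine not_lt_and_lt_of_neg_one_sub_div_mem_Icc (by exact_mod_cast hb) hη ?_ ⟨hlow, hhigh⟩
  rw [hj]
  exact ⟨hanti j D hjD le_rfl, hanti 1 j hj1 hjD⟩

/-- Let `θ₀ > θ₁ > ⋯ > θ_D` be the distinct eigenvalues of `A`.  Let
`v ≠ 0` lie in `E₁* V`, orthogonal to `s₁`, with `E₁* A E₁* v = η v` and `η ≠ -1`.
If `-1 - b₁/(1+θ₁) < η < -1 - b₁/(1+θ_D)` then `η̃ = -1 - b₁/(1+η)` is not an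
eigenvalue of `A`.  Here `b₁ = p 1 1 2`. -/
theorem stmt14 (G : SimpleGraph X) (D : ℕ) (p : ℕ → ℕ → ℕ → ℕ)
    (hdrg : IsDRG G D p) (hD : 3 ≤ D) (x : X)
    (θ : ℕ → ℝ)
    (hmono : ∀ i j : ℕ, i < j → j ≤ D → θ j < θ i)
    (hspec : ∀ i : ℕ, i ≤ D → ((θ i : ℂ)) ∈ spectrum ℂ (distMat G 1))
    (hall : ∀ μ : ℂ, μ ∈ spectrum ℂ (distMat G 1) → ∃ i : ℕ, i ≤ D ∧ μ = (θ i : ℂ))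
    (v : X → ℂ) (hv : v ≠ 0) (hvE1 : (dualIdem G x 1).mulVec v = v)
    (horth : ∑ y : X, v y * (starRingEnd ℂ) (sphereVec G x 1 y) = 0)
    (η : ℝ)
    (heig : (dualIdem G x 1 * distMat G 1 * dualIdem G x 1).mulVec v = (η : ℂ) • v)
    (hη : η ≠ -1)
    (hlow : -1 - (p 1 1 2 : ℝ) / (1 + θ 1) < η)
    (hhigh : η < -1 - (p 1 1 2 : ℝ) / (1 + θ D)) :
    ((-1 - (p 1 1 2 : ℝ) / (1 + η) : ℝ) : ℂ) ∉ spectrum ℂ (distMat G 1) :=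
  stmt14_general G D p hdrg hD x θ hmono hall v hv η heig hη hlow hhigh
end
end
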